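/- Let a, b, c be the generators of IMG(z²+i), i.e., the automorphisms of the binary rooted tree defined by a = (1,1)σ, b = (a,c), c = (b,1). Then the element ac has order 4. -/
import Mathlib


/-- The generator `a = (1,1)σ` of `IMG(z²+i)`, acting on the binary rooted tree
whose vertices are finite binary words. -/
def aF : List Bool → List Bool
  | [] => []
  | x :: s => (!x) :: s

mutual
/-- The generator `b = (a, c)` of `IMG(z²+i)`. -/
def bF : List Bool → List Bool
  | [] => []
  | false :: s => false :: aF s
  | true :: s => true :: cF s
/-- The generator `c = (b, 1)` of `IMG(z²+i)`. -/
def cF : List Bool → List Bool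
  | [] => []
  | false :: s => false :: bF s
  | true :: s => true :: s
end

theorem aF_invol : ∀ s, aF (aF s) = s := by
  intro s; cases s <;> simp [aF]

theorem bcF_invol : ∀ s, bF (bF s) = s ∧ cF (cF s) = s := by
  intro s
  induction s with
  | nil => exact ⟨rfl, rfl⟩
  | cons x s ih =>
    cases x <;> exact ⟨by simp [bF, ih.1, ih.2, aF_invol], by simp [cF, ih.1]⟩

/-- `a` as a tree automorphism. -/
def aE : Equiv.Perm (List Bool) := ⟨aF, aF, aF_invol, aF_invol⟩
/-- `b` as a tree automorphism. -/
def bE : Equiv.Perm (List Bool) := ⟨bF, bF, fun s => (bcF_invol s).1, fun s => (bcF_invol s).1⟩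
/-- `c` as a tree automorphism. -/
def cE : Equiv.Perm (List Bool) := ⟨cF, cF, fun s => (bcF_invol s).2, fun s => (bcF_invol s).2⟩

lemma key4 : ∀ s, aF (cF (aF (cF (aF (cF (aF (cF s))))))) = s := by
  intro s
  match s with
  | [] => rfl
  | false :: t => simp [aF, cF, (bcF_invol t).1]
  | true :: t => simp [aF, cF, (bcF_invol t).1]

lemma key2 : aF (cF (aF (cF [false, false, true]))) = [false, false, false] := by
  decide

/-- In `IMG(z²+i)`, the element `ac` has order `4`. -/
theorem stmt_7 : orderOf (aE * cE) = 4 := by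
  have h4 : (aE * cE) ^ 4 = 1 := by
    ext s
    simp [pow_succ, Equiv.Perm.mul_apply, aE, cE, key4 s]
  have h2 : ¬ (aE * cE) ^ 2 = 1 := by
    intro h
    have := congrArg (fun e => e [false, false, true]) h
    simp [pow_succ, Equiv.Perm.mul_apply, aE, cE, key2] at this
  have := orderOf_eq_prime_pow (p := 2) (n := 1) (x := aE * cE) (by simpa using h2) (by simpa using h4)
  simpa using this
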